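/- arXiv:2411.02977 — 2 statements merged into one kernel-verified Lean document; each statement's English description precedes it below -/
import Mathlib

section
/- The complement of strong bisimilarity is a symmetric relation satisfying the apartness rule, i.e., it is an apartness relation; hence apartness is contained in the complement of bisimilarity. -/
/-- A symmetric relation `R` is a strong bisimulation on the LTS `(X, A, tr)`. -/
def IsBisimulation {X A : Type} (tr : X → A → X → Prop) (R : X → X → Prop) : Prop :=
  Symmetric R ∧ ∀ x y, R x y → ∀ a x', tr x a x' → ∃ y', tr y a y' ∧ R x' y'

/-- Strong bisimilarity: the union of all strong bisimulations. -/
def Bisimilar {X A : Type} (tr : X → A → X → Prop) (x y : X) : Prop :=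
  ∃ R, IsBisimulation tr R ∧ R x y

/-- A symmetric relation `R` is an apartness relation on the LTS `(X, A, tr)`. -/
def IsApartnessRel {X A : Type} (tr : X → A → X → Prop) (R : X → X → Prop) : Prop :=
  Symmetric R ∧ ∀ x y a x', tr x a x' → (∀ y', tr y a y' → R x' y') → R x y

/-- Apartness: the intersection of all apartness relations. -/
def Apart {X A : Type} (tr : X → A → X → Prop) (x y : X) : Prop :=
  ∀ R, IsApartnessRel tr R → R x y

/-- An LTS is image-finite if every state has finitely many `a`-successors, for each `a`. -/
def ImageFinite {X A : Type} (tr : X → A → X → Prop) : Prop :=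
  ∀ x a, {x' | tr x a x'}.Finite

section

variable {X A : Type} {tr : X → A → X → Prop}

theorem Bisimilar.symm {x y : X} (h : Bisimilar tr x y) : Bisimilar tr y x :=
  let ⟨R, hR, hxy⟩ := h
  ⟨R, hR, hR.1 hxy⟩

theorem Bisimilar.exists_step {x y x' : X} {a : A} (h : Bisimilar tr x y) (hx : tr x a x') :
    ∃ y', tr y a y' ∧ Bisimilar tr x' y' :=
  let ⟨R, hR, hxy⟩ := h
  let ⟨y', hy, hR'⟩ := hR.2 x y hxy a x' hx
  ⟨y', hy, R, hR, hR'⟩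

end

theorem isApartnessRel_not_bisimilar {X A : Type} (tr : X → A → X → Prop) :
    IsApartnessRel tr (fun x y => ¬ Bisimilar tr x y) := by
  refine ⟨fun x y hxy hyx => hxy hyx.symm, fun x y a x' hx hsucc hxy => ?_⟩
  obtain ⟨y', hy, hx'y'⟩ := hxy.exists_step hx
  exact hsucc y' hy hx'y'

theorem not_bisimilar_isApartnessRel {X A : Type} (tr : X → A → X → Prop) :
    IsApartnessRel tr (fun x y => ¬ Bisimilar tr x y) ∧
      ∀ x y, Apart tr x y → ¬ Bisimilar tr x y :=
  ⟨isApartnessRel_not_bisimilar tr, fun _ _ h => h _ (isApartnessRel_not_bisimilar tr)⟩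
end

section
/- For an image-finite LTS, the complement of the apartness relation # is a strong bisimulation; hence the complement of bisimilarity is contained in apartness. -/
/-! Apartness is the least relation closed under its derivation rule, so it is itself symmetric
and closed under that rule. Read contrapositively, closure under the rule says that a transition
of `x`, for a pair `x, y` that is not apart, is matched by a transition of `y` to a pair that is
not apart: the complement of apartness is a bisimulation, hence contained in bisimilarity. -/

namespace Apart

variable {X A : Type} {tr : X → A → X → Prop}

theorem symm {x y : X} (h : Apart tr x y) : Apart tr y x :=
  fun R hR => hR.1 (h R hR)

theorem of_forall_apart {x y x' : X} {a : A} (hx : tr x a x')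
    (hy : ∀ y', tr y a y' → Apart tr x' y') : Apart tr x y :=
  fun R hR => hR.2 x y a x' hx fun y' hy' => hy y' hy' R hR

end Apart

section

variable {X A : Type}

theorem isBisimulation_not_apart (tr : X → A → X → Prop) :
    IsBisimulation tr (fun x y => ¬ Apart tr x y) := by
  refine ⟨fun _ _ hxy hyx => hxy hyx.symm, fun x y hxy a x' hx => ?_⟩
  by_contra! hy
  exact hxy (Apart.of_forall_apart hx hy)

theorem bisimilar_of_not_apart (tr : X → A → X → Prop) {x y : X} (h : ¬ Apart tr x y) :
    Bisimilar tr x y :=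
  ⟨_, isBisimulation_not_apart tr, h⟩

end

theorem not_apart_isBisimulation_general {X A : Type} (tr : X → A → X → Prop) :
    IsBisimulation tr (fun x y => ¬ Apart tr x y) ∧
      ∀ x y, ¬ Bisimilar tr x y → Apart tr x y :=
  ⟨isBisimulation_not_apart tr, fun _ _ hnb =>
    by_contra fun h => hnb (bisimilar_of_not_apart tr h)⟩

theorem not_apart_isBisimulation {X A : Type} (tr : X → A → X → Prop)
    (h : ImageFinite tr) :
    IsBisimulation tr (fun x y => ¬ Apart tr x y) ∧
      ∀ x y, ¬ Bisimilar tr x y → Apart tr x y :=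
  not_apart_isBisimulation_general tr
end
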